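/- arXiv:2411.15248 — 3 statements merged into one kernel-verified Lean document; each statement's English description precedes it below -/
import Mathlib

section
/- For any noisy observation x = y + n with n zero-mean and independent of y coordinatewise across blocks of 𝒥, and any 𝒥-invariant function f, the expected self-supervised loss satisfies E‖f(x) − x‖² = E‖f(x) − y‖² + E‖n‖², i.e., the self-supervised loss equals the supervised loss plus a constant independent of f. -/
open MeasureTheory ProbabilityTheory

/-- `f` is `𝒥`-invariant: for each block `J ∈ 𝒥`, `f(x)_J` depends only on the
coordinates of `x` outside `J`. -/
def JInvariant (m : ℕ) (𝒥 : Set (Set (Fin m))) (f : (Fin m → ℝ) → (Fin m → ℝ)) : Prop :=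
  ∀ J ∈ 𝒥, ∀ x y : Fin m → ℝ, (∀ i : Fin m, i ∉ J → x i = y i) →
    ∀ i ∈ J, f x i = f y i

/-- for a noisy observation `x = y + n`, with zero-mean noise `n`
whose restriction to each block `J` of the partition `𝒥` is independent of
`(y, x_{Jᶜ})`, and any `𝒥`-invariant `f` (with all second moments finite), the
self-supervised loss decomposes as
`E‖f(x) − x‖² = E‖f(x) − y‖² + E‖n‖²`. -/
theorem stmt_4 {Ω : Type*} [MeasurableSpace Ω] (μ : Measure Ω) [IsProbabilityMeasure μ]
    (m : ℕ) (𝒥 : Set (Set (Fin m))) (h𝒥 : Setoid.IsPartition 𝒥)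
    (x y n : Ω → (Fin m → ℝ))
    (hx : Measurable x) (hy : Measurable y) (hn : Measurable n)
    (hsum : ∀ ω, x ω = y ω + n ω)
    (hzero : ∀ i : Fin m, ∫ ω, n ω i ∂μ = 0)
    (hindep : ∀ J ∈ 𝒥,
      IndepFun (fun ω => (fun i : J => n ω i))
        (fun ω => (y ω, fun i : (Jᶜ : Set (Fin m)) => x ω i)) μ)
    (f : (Fin m → ℝ) → (Fin m → ℝ)) (hf : JInvariant m 𝒥 f)
    (hf_meas : Measurable f)
    (hint₁ : Integrable (fun ω => ∑ i, (f (x ω) i - x ω i) ^ 2) μ)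
    (hint₂ : Integrable (fun ω => ∑ i, (f (x ω) i - y ω i) ^ 2) μ)
    (hint₃ : Integrable (fun ω => ∑ i, (n ω i) ^ 2) μ) :
    ∫ ω, ∑ i, (f (x ω) i - x ω i) ^ 2 ∂μ =
      (∫ ω, ∑ i, (f (x ω) i - y ω i) ^ 2 ∂μ) + ∫ ω, ∑ i, (n ω i) ^ 2 ∂μ := by
  classical
  -- measurability of basic pieces
  have hfy_meas : ∀ i : Fin m, Measurable (fun ω => f (x ω) i - y ω i) := fun i =>
    ((measurable_pi_apply i).comp (hf_meas.comp hx)).sub ((measurable_pi_apply i).comp hy)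
  have hn_meas : ∀ i : Fin m, Measurable (fun ω => n ω i) := fun i =>
    (measurable_pi_apply i).comp hn
  -- coordinatewise square-integrability
  have hsq_fy : ∀ i : Fin m, Integrable (fun ω => (f (x ω) i - y ω i) ^ 2) μ := by
    intro i
    refine hint₂.mono' ((hfy_meas i).pow_const 2).aestronglyMeasurable ?_
    filter_upwards with ω
    rw [Real.norm_eq_abs, abs_of_nonneg (sq_nonneg _)]
    exact Finset.single_le_sum (f := fun j => (f (x ω) j - y ω j) ^ 2)
      (fun j _ => sq_nonneg _) (Finset.mem_univ i)
  have hsq_n : ∀ i : Fin m, Integrable (fun ω => (n ω i) ^ 2) μ := by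
    intro i
    refine hint₃.mono' ((hn_meas i).pow_const 2).aestronglyMeasurable ?_
    filter_upwards with ω
    rw [Real.norm_eq_abs, abs_of_nonneg (sq_nonneg _)]
    exact Finset.single_le_sum (f := fun j => (n ω j) ^ 2)
      (fun j _ => sq_nonneg _) (Finset.mem_univ i)
  -- the cross terms are integrable
  have hcross_int : ∀ i : Fin m,
      Integrable (fun ω => (f (x ω) i - y ω i) * n ω i) μ := by
    intro i
    refine ((hsq_fy i).add (hsq_n i)).mono'
      ((hfy_meas i).mul (hn_meas i)).aestronglyMeasurable ?_
    filter_upwards with ω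
    rw [Real.norm_eq_abs, abs_mul]
    simp only [Pi.add_apply]
    nlinarith [abs_nonneg (f (x ω) i - y ω i), abs_nonneg (n ω i),
      sq_abs (f (x ω) i - y ω i), sq_abs (n ω i),
      sq_nonneg (|f (x ω) i - y ω i| - |n ω i|)]
  -- the cross terms vanish
  have hcross : ∀ i : Fin m, ∫ ω, (f (x ω) i - y ω i) * n ω i ∂μ = 0 := by
    intro i
    obtain ⟨J, ⟨hJ𝒥, hiJ⟩, -⟩ := h𝒥.2 i
    -- independence of `f(x)_i - y_i` and `n_i`
    have hindepJ := hindep J hJ𝒥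
    -- patch a `Jᶜ`-vector into a full vector
    set patch : ((Jᶜ : Set (Fin m)) → ℝ) → (Fin m → ℝ) :=
      fun z j => if h : j ∈ (Jᶜ : Set (Fin m)) then z ⟨j, h⟩ else 0 with hpatch
    have hpatch_meas : Measurable patch := by
      refine measurable_pi_lambda _ (fun j => ?_)
      by_cases h : j ∈ (Jᶜ : Set (Fin m))
      · simpa only [hpatch, dif_pos h] using measurable_pi_apply (⟨j, h⟩ : (Jᶜ : Set (Fin m)))
      · simpa only [hpatch, dif_neg h] using measurable_const
    set ψ : (Fin m → ℝ) × ((Jᶜ : Set (Fin m)) → ℝ) → ℝ :=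
      fun p => f (patch p.2) i - p.1 i with hψ
    have hψ_meas : Measurable ψ :=
      ((measurable_pi_apply i).comp (hf_meas.comp (hpatch_meas.comp measurable_snd))).sub
        ((measurable_pi_apply i).comp measurable_fst)
    set φ : (↥J → ℝ) → ℝ := fun v => v ⟨i, hiJ⟩ with hφ
    have hφ_meas : Measurable φ := measurable_pi_apply _
    have hIndep : IndepFun (fun ω => f (x ω) i - y ω i) (fun ω => n ω i) μ := by
      have h1 := (hindepJ.symm.comp hψ_meas hφ_meas)
      have h2 : (ψ ∘ fun ω => (y ω, fun j : (Jᶜ : Set (Fin m)) => x ω j)) =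
          fun ω => f (x ω) i - y ω i := by
        funext ω
        have hagree : ∀ j : Fin m, j ∉ J →
            patch (fun j : (Jᶜ : Set (Fin m)) => x ω j) j = x ω j := by
          intro j hj
          simp [hpatch, hj]
        have := hf J hJ𝒥 (patch (fun j : (Jᶜ : Set (Fin m)) => x ω j)) (x ω) hagree i hiJ
        simp [hψ, Function.comp, this]
      have h3 : (φ ∘ fun ω => (fun j : ↥J => n ω j)) =
          fun ω => n ω i := rfl
      rwa [h2, h3] at h1
    have := hIndep.integral_mul_eq_mul_integral (hfy_meas i).aestronglyMeasurable
      (hn_meas i).aestronglyMeasurable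
    calc ∫ ω, (f (x ω) i - y ω i) * n ω i ∂μ
        = (∫ ω, f (x ω) i - y ω i ∂μ) * ∫ ω, n ω i ∂μ := this
      _ = 0 := by rw [hzero i, mul_zero]
  -- pointwise algebraic identity
  have hpt : ∀ ω, ∑ i, (f (x ω) i - x ω i) ^ 2 =
      (∑ i, (f (x ω) i - y ω i) ^ 2) + (∑ i, (n ω i) ^ 2)
        - 2 * ∑ i, (f (x ω) i - y ω i) * n ω i := by
    intro ω
    rw [Finset.mul_sum, ← Finset.sum_add_distrib, ← Finset.sum_sub_distrib]
    refine Finset.sum_congr rfl (fun i _ => ?_)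
    have : x ω i = y ω i + n ω i := by rw [hsum ω]; rfl
    rw [this]; ring
  have hC : Integrable (fun ω => ∑ i, (f (x ω) i - y ω i) * n ω i) μ :=
    integrable_finset_sum _ (fun i _ => hcross_int i)
  have hCint : ∫ ω, ∑ i, (f (x ω) i - y ω i) * n ω i ∂μ = 0 := by
    rw [integral_finset_sum _ (fun i _ => hcross_int i)]
    exact Finset.sum_eq_zero (fun i _ => hcross i)
  calc ∫ ω, ∑ i, (f (x ω) i - x ω i) ^ 2 ∂μ
      = ∫ ω, ((∑ i, (f (x ω) i - y ω i) ^ 2) + (∑ i, (n ω i) ^ 2)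
          - 2 * ∑ i, (f (x ω) i - y ω i) * n ω i) ∂μ := by
        exact integral_congr_ae (Filter.Eventually.of_forall hpt)
    _ = (∫ ω, (∑ i, (f (x ω) i - y ω i) ^ 2 + ∑ i, (n ω i) ^ 2) ∂μ)
          - ∫ ω, 2 * ∑ i, (f (x ω) i - y ω i) * n ω i ∂μ :=
        integral_sub (hint₂.add hint₃) (hC.const_mul 2)
    _ = (∫ ω, ∑ i, (f (x ω) i - y ω i) ^ 2 ∂μ) + (∫ ω, ∑ i, (n ω i) ^ 2 ∂μ)
          - 2 * ∫ ω, ∑ i, (f (x ω) i - y ω i) * n ω i ∂μ := by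
        rw [integral_const_mul]
        congr 1
        exact integral_add hint₂ hint₃
    _ = (∫ ω, ∑ i, (f (x ω) i - y ω i) ^ 2 ∂μ) + ∫ ω, ∑ i, (n ω i) ^ 2 ∂μ := by
        rw [hCint]; ring
end

section
/- The minimizer over all measurable 𝒥-invariant functions f of E‖f(x) − x‖² (with x = y + n, noise independent across the blocks and zero-mean) is given blockwise by the conditional expectation f*(x)_J = E[y_J ∣ x_{J^c}]; i.e., the optimal 𝒥-invariant self-supervised denoiser equals the optimal 𝒥-invariant supervised denoiser. -/
open MeasureTheory ProbabilityTheory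

lemma integrable_mul_of_memL2 {Ω : Type*} {mΩ : MeasurableSpace Ω} {μ : Measure Ω}
    {f g : Ω → ℝ} (hf : MemLp f 2 μ) (hg : MemLp g 2 μ) :
    Integrable (fun ω => f ω * g ω) μ := by
  have h1 := (hf.add hg).integrable_sq
  have h2 := hf.integrable_sq
  have h3 := hg.integrable_sq
  have heq : (fun ω => f ω * g ω)
      = fun ω => (((f ω + g ω) ^ 2 - f ω ^ 2) - g ω ^ 2) / 2 := by
    funext ω; ring
  rw [heq]
  exact ((h1.sub h2).sub h3).div_const 2

lemma condexp_L2_min {Ω : Type*} {m0 : MeasurableSpace Ω} {μ : Measure Ω}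
    [IsProbabilityMeasure μ] {m' : MeasurableSpace Ω} (hm : m' ≤ m0)
    {Y g c : Ω → ℝ} (hY : MemLp Y 2 μ) (hg : MemLp g 2 μ) (hc : MemLp c 2 μ)
    (hgm : AEStronglyMeasurable[m'] g μ) (hcm : c =ᵐ[μ] μ[Y|m']) :
    ∫ ω, (c ω - Y ω) ^ 2 ∂μ ≤ ∫ ω, (g ω - Y ω) ^ 2 ∂μ := by
  haveI : SigmaFinite (μ.trim hm) := inferInstance
  have hsm := stronglyMeasurable_condExp (m := m') (m₀ := m0) (μ := μ) (f := Y)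
  have hcm' : AEStronglyMeasurable[m'] c μ :=
    (hsm.aestronglyMeasurable).congr hcm.symm
  set d : Ω → ℝ := fun ω => g ω - c ω with hd_def
  set e : Ω → ℝ := fun ω => c ω - Y ω with he_def
  have hd2 : MemLp d 2 μ := hg.sub hc
  have hdm : AEStronglyMeasurable[m'] d μ := hgm.sub hcm'
  have he2 : MemLp e 2 μ := hc.sub hY
  have hde : Integrable (fun ω => d ω * e ω) μ := integrable_mul_of_memL2 hd2 he2
  have he1 : Integrable e μ := he2.integrable one_le_two
  have hcond_e : μ[e|m'] =ᵐ[μ] 0 := by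
    have h1 : μ[e|m'] =ᵐ[μ] μ[c|m'] - μ[Y|m'] :=
      condExp_sub (hc.integrable one_le_two) (hY.integrable one_le_two) m'
    have h2 : μ[c|m'] =ᵐ[μ] c := condExp_of_aestronglyMeasurable' hm hcm'
      (hc.integrable one_le_two)
    filter_upwards [h1, h2, hcm] with ω h1 h2 h3
    simp only [Pi.sub_apply, Pi.zero_apply] at h1 h2 ⊢
    rw [h1, h2, h3]
    ring
  have hcross : ∫ ω, d ω * e ω ∂μ = 0 := by
    have h1 : ∫ ω, d ω * e ω ∂μ = ∫ ω, (μ[fun ω => d ω * e ω|m']) ω ∂μ :=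
      (integral_condExp hm).symm
    have h2 : μ[fun ω => d ω * e ω|m'] =ᵐ[μ] fun ω => d ω * (μ[e|m']) ω :=
      condExp_mul_of_aestronglyMeasurable_left hdm hde he1
    have h3 : (fun ω => d ω * (μ[e|m']) ω) =ᵐ[μ] 0 := by
      filter_upwards [hcond_e] with ω h
      simp [h]
    rw [h1, integral_congr_ae (h2.trans h3)]
    simp
  have hexp : (fun ω => (g ω - Y ω) ^ 2)
      = fun ω => d ω ^ 2 + 2 * (d ω * e ω) + e ω ^ 2 := by
    funext ω; simp only [hd_def, he_def]; ring
  have hInt1 : Integrable (fun ω => d ω ^ 2) μ := hd2.integrable_sq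
  have hInt2 : Integrable (fun ω => 2 * (d ω * e ω)) μ := hde.const_mul 2
  have hInt3 : Integrable (fun ω => e ω ^ 2) μ := he2.integrable_sq
  have hre : ∫ ω, (g ω - Y ω) ^ 2 ∂μ
      = ∫ ω, d ω ^ 2 ∂μ + 2 * ∫ ω, d ω * e ω ∂μ + ∫ ω, e ω ^ 2 ∂μ := by
    have A := integral_add (f := fun ω => d ω ^ 2 + 2 * (d ω * e ω))
      (g := fun ω => e ω ^ 2) (μ := μ) (hInt1.add hInt2) hInt3
    have B := integral_add (f := fun ω => d ω ^ 2)
      (g := fun ω => 2 * (d ω * e ω)) (μ := μ) hInt1 hInt2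
    rw [hexp, A, B, integral_const_mul]
  have hd2nonneg : 0 ≤ ∫ ω, d ω ^ 2 ∂μ := integral_nonneg fun ω => sq_nonneg _
  have : ∫ ω, (c ω - Y ω) ^ 2 ∂μ = ∫ ω, e ω ^ 2 ∂μ := rfl
  rw [this, hre, hcross]
  linarith

/-- with `x = y + n`, zero-mean noise whose block restrictions
`n_J` are independent of `(y, x_{Jᶜ})`, the minimizer over measurable
`𝒥`-invariant functions of the self-supervised loss `E‖f(x) − x‖²` is the
blockwise conditional expectation `f*(x)_J = E[y_J ∣ x_{Jᶜ}]`: any `𝒥`-invariant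
`fstar` which equals this conditional expectation a.e. achieves a
self-supervised loss no larger than that of any measurable `𝒥`-invariant `f`. -/
theorem stmt_12 {Ω : Type*} [MeasurableSpace Ω] (μ : Measure Ω) [IsProbabilityMeasure μ]
    (m : ℕ) (𝒥 : Set (Set (Fin m))) (h𝒥 : Setoid.IsPartition 𝒥)
    (x y n : Ω → (Fin m → ℝ))
    (hx : Measurable x) (hy : Measurable y) (hn : Measurable n)
    (hsum : ∀ ω, x ω = y ω + n ω)
    (hzero : ∀ i : Fin m, ∫ ω, n ω i ∂μ = 0)
    (hindep : ∀ J ∈ 𝒥,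
      IndepFun (fun ω => (fun i : J => n ω i))
        (fun ω => (y ω, fun i : (Jᶜ : Set (Fin m)) => x ω i)) μ)
    (hL2x : ∀ i : Fin m, MemLp (fun ω => x ω i) 2 μ)
    (hL2y : ∀ i : Fin m, MemLp (fun ω => y ω i) 2 μ)
    (fstar : (Fin m → ℝ) → (Fin m → ℝ)) (hfstar_inv : JInvariant m 𝒥 fstar)
    (hfstar_meas : Measurable fstar)
    (hfstar : ∀ J ∈ 𝒥, ∀ i ∈ J,
      (fun ω => fstar (x ω) i) =ᵐ[μ]
        μ[(fun ω => y ω i) |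
          MeasurableSpace.comap (fun ω => (fun j : (Jᶜ : Set (Fin m)) => x ω j))
            inferInstance])
    (hfstarL2 : ∀ i : Fin m, MemLp (fun ω => fstar (x ω) i) 2 μ) :
    ∀ f : (Fin m → ℝ) → (Fin m → ℝ), JInvariant m 𝒥 f → Measurable f →
      (∀ i : Fin m, MemLp (fun ω => f (x ω) i) 2 μ) →
      ∫ ω, ∑ i, (fstar (x ω) i - x ω i) ^ 2 ∂μ ≤
        ∫ ω, ∑ i, (f (x ω) i - x ω i) ^ 2 ∂μ := by
  intro f hf_inv hf_meas hfL2
  have hInt_star : ∀ i : Fin m, Integrable (fun ω => (fstar (x ω) i - x ω i) ^ 2) μ :=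
    fun i => ((hfstarL2 i).sub (hL2x i)).integrable_sq
  have hInt_f : ∀ i : Fin m, Integrable (fun ω => (f (x ω) i - x ω i) ^ 2) μ :=
    fun i => ((hfL2 i).sub (hL2x i)).integrable_sq
  rw [integral_finset_sum _ (fun i _ => hInt_star i),
    integral_finset_sum _ (fun i _ => hInt_f i)]
  refine Finset.sum_le_sum fun i _ => ?_
  obtain ⟨J, ⟨hJ𝒥, hiJ⟩, -⟩ := h𝒥.2 i
  have hfs := hfstar J hJ𝒥 i hiJ
  have hπ : Measurable (fun ω => (fun j : (Jᶜ : Set (Fin m)) => x ω j)) :=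
    measurable_pi_lambda _ fun j => (measurable_pi_apply (j : Fin m)).comp hx
  have hπm' : Measurable[MeasurableSpace.comap
      (fun ω => (fun j : (Jᶜ : Set (Fin m)) => x ω j)) inferInstance]
      (fun ω => (fun j : (Jᶜ : Set (Fin m)) => x ω j)) :=
    Measurable.of_comap_le le_rfl
  -- n_i is in L²
  have hn2 : MemLp (fun ω => n ω i) 2 μ := by
    have h := (hL2x i).sub (hL2y i)
    have hne : ((fun ω => x ω i) - fun ω => y ω i) = fun ω => n ω i := by
      funext ω; simp only [Pi.sub_apply, hsum ω, Pi.add_apply]; ring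
    rwa [hne] at h
  -- representation of J-invariant functions through x_{Jᶜ}
  have repr : ∀ g : (Fin m → ℝ) → (Fin m → ℝ), JInvariant m 𝒥 g → Measurable g →
      ∃ G : ((Jᶜ : Set (Fin m)) → ℝ) → ℝ, Measurable G ∧
        ∀ v : Fin m → ℝ, g v i = G (fun j : (Jᶜ : Set (Fin m)) => v j) := by
    intro g hginv hgmeas
    classical
    refine ⟨fun b => g (fun j => if h : j ∈ (Jᶜ : Set (Fin m)) then b ⟨j, h⟩ else 0) i,
      ?_, ?_⟩
    · refine (measurable_pi_apply i).comp (hgmeas.comp (measurable_pi_lambda _ fun j => ?_))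
      by_cases h : j ∈ (Jᶜ : Set (Fin m))
      · simp only [dif_pos h]; exact measurable_pi_apply _
      · simp only [dif_neg h]; exact measurable_const
    · intro v
      refine hginv J hJ𝒥 v _ ?_ i hiJ
      intro k hk
      have hk' : k ∈ (Jᶜ : Set (Fin m)) := hk
      simp [dif_pos hk', hk]
  obtain ⟨Gf, hGf_meas, hGf⟩ := repr f hf_inv hf_meas
  obtain ⟨Gs, hGs_meas, hGs⟩ := repr fstar hfstar_inv hfstar_meas
  have hfeq : (fun ω => f (x ω) i)
      = fun ω => Gf (fun j : (Jᶜ : Set (Fin m)) => x ω j) := funext fun ω => hGf (x ω)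
  have hseq : (fun ω => fstar (x ω) i)
      = fun ω => Gs (fun j : (Jᶜ : Set (Fin m)) => x ω j) := funext fun ω => hGs (x ω)
  -- the cross term vanishes for any function of x_{Jᶜ}
  have cross : ∀ G : ((Jᶜ : Set (Fin m)) → ℝ) → ℝ, Measurable G →
      MemLp (fun ω => G (fun j : (Jᶜ : Set (Fin m)) => x ω j)) 2 μ →
      ∫ ω, (G (fun j : (Jᶜ : Set (Fin m)) => x ω j) - y ω i) * n ω i ∂μ = 0 := by
    intro G hG hGL2
    have hψ : Measurable (fun p : (Fin m → ℝ) × ((Jᶜ : Set (Fin m)) → ℝ) =>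
        G p.2 - p.1 i) :=
      (hG.comp measurable_snd).sub ((measurable_pi_apply i).comp measurable_fst)
    have hφ : Measurable (fun v : ↥J → ℝ => v (⟨i, hiJ⟩ : ↥J)) :=
      measurable_pi_apply _
    have hind : IndepFun (fun ω => G (fun j : (Jᶜ : Set (Fin m)) => x ω j) - y ω i)
        (fun ω => n ω i) μ := ((hindep J hJ𝒥).comp hφ hψ).symm
    have hX : Integrable (fun ω => G (fun j : (Jᶜ : Set (Fin m)) => x ω j) - y ω i) μ :=
      (hGL2.sub (hL2y i)).integrable one_le_two
    have hYint : Integrable (fun ω => n ω i) μ := hn2.integrable one_le_two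
    have hmul : ∫ ω, (G (fun j : (Jᶜ : Set (Fin m)) => x ω j) - y ω i) * n ω i ∂μ
        = (∫ ω, (G (fun j : (Jᶜ : Set (Fin m)) => x ω j) - y ω i) ∂μ)
          * ∫ ω, n ω i ∂μ :=
      hind.integral_mul_eq_mul_integral hX.aestronglyMeasurable hYint.aestronglyMeasurable
    rw [hmul, hzero i, mul_zero]
  have hcr_s : ∫ ω, (fstar (x ω) i - y ω i) * n ω i ∂μ = 0 := by
    have h := cross Gs hGs_meas (by rw [← hseq]; exact hfstarL2 i)
    rw [show (fun ω => (fstar (x ω) i - y ω i) * n ω i)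
        = fun ω => (Gs (fun j : (Jᶜ : Set (Fin m)) => x ω j) - y ω i) * n ω i from
      funext fun ω => by rw [hGs (x ω)]]
    exact h
  have hcr_f : ∫ ω, (f (x ω) i - y ω i) * n ω i ∂μ = 0 := by
    have h := cross Gf hGf_meas (by rw [← hfeq]; exact hfL2 i)
    rw [show (fun ω => (f (x ω) i - y ω i) * n ω i)
        = fun ω => (Gf (fun j : (Jᶜ : Set (Fin m)) => x ω j) - y ω i) * n ω i from
      funext fun ω => by rw [hGf (x ω)]]
    exact h
  -- loss decomposition
  have hxieq : ∀ ω, x ω i = y ω i + n ω i := fun ω => by rw [hsum ω]; rfl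
  have decomp : ∀ p : Ω → ℝ, MemLp p 2 μ →
      (∫ ω, (p ω - y ω i) * n ω i ∂μ = 0) →
      ∫ ω, (p ω - x ω i) ^ 2 ∂μ
        = ∫ ω, (p ω - y ω i) ^ 2 ∂μ + ∫ ω, (n ω i) ^ 2 ∂μ := by
    intro p hp hcr
    have h1 : Integrable (fun ω => (p ω - y ω i) ^ 2) μ := (hp.sub (hL2y i)).integrable_sq
    have h2 : Integrable (fun ω => 2 * ((p ω - y ω i) * n ω i)) μ :=
      (integrable_mul_of_memL2 (hp.sub (hL2y i)) hn2).const_mul 2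
    have h3 : Integrable (fun ω => (n ω i) ^ 2) μ := hn2.integrable_sq
    have hexp : (fun ω => (p ω - x ω i) ^ 2)
        = fun ω => (p ω - y ω i) ^ 2 - 2 * ((p ω - y ω i) * n ω i) + (n ω i) ^ 2 := by
      funext ω; rw [hxieq ω]; ring
    have A := integral_add (f := fun ω => (p ω - y ω i) ^ 2 - 2 * ((p ω - y ω i) * n ω i))
      (g := fun ω => (n ω i) ^ 2) (μ := μ) (h1.sub h2) h3
    have B := integral_sub (f := fun ω => (p ω - y ω i) ^ 2)
      (g := fun ω => 2 * ((p ω - y ω i) * n ω i)) (μ := μ) h1 h2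
    rw [hexp, A, B, integral_const_mul, hcr]
    ring
  have d1 := decomp _ (hfstarL2 i) hcr_s
  have d2 := decomp _ (hfL2 i) hcr_f
  -- conditional expectation minimizes the supervised loss
  have hgm : AEStronglyMeasurable[MeasurableSpace.comap
      (fun ω => (fun j : (Jᶜ : Set (Fin m)) => x ω j)) inferInstance]
      (fun ω => f (x ω) i) μ := by
    rw [hfeq]
    exact ((hGf_meas.comp hπm').stronglyMeasurable).aestronglyMeasurable
  have hBle : ∫ ω, (fstar (x ω) i - y ω i) ^ 2 ∂μ ≤ ∫ ω, (f (x ω) i - y ω i) ^ 2 ∂μ :=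
    condexp_L2_min hπ.comap_le (hL2y i) (hfL2 i) (hfstarL2 i) hgm hfs
  rw [d1, d2]
  linarith
end

section
/- If the noise model is x = y + n with n ~ N(0, σ²I) independent of y, then for any 𝒥-invariant denoiser f, PSNR improvement of f over the identity in expectation is equivalent to E‖f(x) − y‖² < E‖n‖² = mσ²; and the trivial identity map f(x) = x is never 𝒥-invariant (for nonempty blocks), so the self-supervised objective cannot be driven to zero by learning the identity. -/
open MeasureTheory ProbabilityTheory
open scoped NNReal ENNReal
open Real

lemma aux_integral_mul_exp_neg_mul_sq {b : ℝ} (hb : 0 < b) :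
    ∫ x : ℝ, x * rexp (-b * x ^ 2) = 0 := by
  have hderiv : ∀ x : ℝ, HasDerivAt (fun y : ℝ => -(2 * b)⁻¹ * rexp (-b * y ^ 2))
      (x * rexp (-b * x ^ 2)) x := by
    intro x
    have h1 : HasDerivAt (fun y : ℝ => -b * y ^ 2) (-b * (2 * x)) x := by
      simpa using (hasDerivAt_pow 2 x).const_mul (-b)
    have h2 := h1.exp.const_mul (-(2 * b)⁻¹)
    refine h2.congr_deriv ?_
    field_simp
  exact integral_eq_zero_of_hasDerivAt_of_integrable hderiv
    (integrable_mul_exp_neg_mul_sq hb)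
    ((integrable_exp_neg_mul_sq hb).const_mul _)

lemma aux_integrable_sq_mul_exp_neg_mul_sq {b : ℝ} (hb : 0 < b) :
    Integrable fun x : ℝ => x ^ 2 * rexp (-b * x ^ 2) := by
  have h := integrable_rpow_mul_exp_neg_mul_sq hb (s := 2) (by norm_num)
  refine h.congr (Filter.Eventually.of_forall fun x => ?_)
  simp only [← Real.rpow_natCast x 2]
  norm_num

lemma aux_integral_sq_mul_exp_neg_mul_sq {b : ℝ} (hb : 0 < b) :
    ∫ x : ℝ, x ^ 2 * rexp (-b * x ^ 2) = Real.sqrt (π / b) / (2 * b) := by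
  have hint2 := aux_integrable_sq_mul_exp_neg_mul_sq hb
  have hderiv : ∀ x : ℝ, HasDerivAt (fun y : ℝ => y * rexp (-b * y ^ 2))
      (rexp (-b * x ^ 2) - 2 * b * (x ^ 2 * rexp (-b * x ^ 2))) x := by
    intro x
    have h1 : HasDerivAt (fun y : ℝ => -b * y ^ 2) (-b * (2 * x)) x := by
      simpa using (hasDerivAt_pow 2 x).const_mul (-b)
    have h2 := (hasDerivAt_id x).mul h1.exp
    refine h2.congr_deriv ?_
    simp [id]
    ring
  have h0 := integral_eq_zero_of_hasDerivAt_of_integrable hderiv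
    ((integrable_exp_neg_mul_sq hb).sub (hint2.const_mul (2 * b)))
    (integrable_mul_exp_neg_mul_sq hb)
  rw [integral_sub (integrable_exp_neg_mul_sq hb) (hint2.const_mul _), integral_const_mul,
    integral_gaussian] at h0
  have hb' : (2 : ℝ) * b ≠ 0 := by positivity
  rw [eq_div_iff hb']
  linarith

lemma aux_gaussian_pdf_eq {v : ℝ≥0} (hv : v ≠ 0) (x : ℝ) :
    gaussianPDFReal 0 v x
      = (Real.sqrt (2 * π * v))⁻¹ * rexp (-(2 * (v : ℝ))⁻¹ * x ^ 2) := by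
  have hv' : (0:ℝ) < v := by positivity
  rw [gaussianPDFReal]
  congr 1
  congr 1
  field_simp
  ring

lemma aux_gaussianReal_integral {v : ℝ≥0} (hv : v ≠ 0) (g : ℝ → ℝ) :
    ∫ x, g x ∂(gaussianReal 0 v) = ∫ x, gaussianPDFReal 0 v x * g x := by
  rw [gaussianReal_of_var_ne_zero _ hv]
  have h : gaussianPDF 0 v
      = fun x => (((gaussianPDFReal 0 v x).toNNReal : ℝ≥0) : ℝ≥0∞) := rfl
  rw [h, integral_withDensity_eq_integral_smul
    ((measurable_gaussianPDFReal 0 v).real_toNNReal) g]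
  congr 1
  funext x
  rw [NNReal.smul_def, smul_eq_mul, Real.coe_toNNReal _ (gaussianPDFReal_nonneg 0 v x)]

lemma aux_gaussianReal_integrable_iff {v : ℝ≥0} (hv : v ≠ 0) (g : ℝ → ℝ) :
    Integrable g (gaussianReal 0 v)
      ↔ Integrable (fun x => gaussianPDFReal 0 v x * g x) := by
  rw [gaussianReal_of_var_ne_zero _ hv]
  have h : gaussianPDF 0 v
      = fun x => (((gaussianPDFReal 0 v x).toNNReal : ℝ≥0) : ℝ≥0∞) := rfl
  rw [h, integrable_withDensity_iff_integrable_smul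
    ((measurable_gaussianPDFReal 0 v).real_toNNReal)]
  constructor <;> intro h' <;> refine h'.congr (Filter.Eventually.of_forall fun x => ?_) <;>
    simp [NNReal.smul_def, Real.coe_toNNReal _ (gaussianPDFReal_nonneg 0 v x)]

lemma aux_integrable_id_gaussianReal {v : ℝ≥0} (hv : v ≠ 0) :
    Integrable (fun x : ℝ => x) (gaussianReal 0 v) := by
  have hv' : (0:ℝ) < v := by positivity
  have hb : (0:ℝ) < (2 * (v : ℝ))⁻¹ := by positivity
  rw [aux_gaussianReal_integrable_iff hv]
  refine ((integrable_mul_exp_neg_mul_sq hb).const_mul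
    ((Real.sqrt (2 * π * v))⁻¹)).congr (Filter.Eventually.of_forall fun x => ?_)
  simp only [aux_gaussian_pdf_eq hv]
  ring

lemma aux_integrable_sq_gaussianReal {v : ℝ≥0} (hv : v ≠ 0) :
    Integrable (fun x : ℝ => x ^ 2) (gaussianReal 0 v) := by
  have hv' : (0:ℝ) < v := by positivity
  have hb : (0:ℝ) < (2 * (v : ℝ))⁻¹ := by positivity
  rw [aux_gaussianReal_integrable_iff hv]
  refine ((aux_integrable_sq_mul_exp_neg_mul_sq hb).const_mul
    ((Real.sqrt (2 * π * v))⁻¹)).congr (Filter.Eventually.of_forall fun x => ?_)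
  simp only [aux_gaussian_pdf_eq hv]
  ring

lemma aux_integral_id_gaussianReal {v : ℝ≥0} (hv : v ≠ 0) :
    ∫ x, x ∂(gaussianReal 0 v) = 0 := by
  have hv' : (0:ℝ) < v := by positivity
  have hb : (0:ℝ) < (2 * (v : ℝ))⁻¹ := by positivity
  rw [aux_gaussianReal_integral hv]
  have : ∀ x : ℝ, gaussianPDFReal 0 v x * x
      = (Real.sqrt (2 * π * v))⁻¹ * (x * rexp (-(2 * (v : ℝ))⁻¹ * x ^ 2)) := by
    intro x; rw [aux_gaussian_pdf_eq hv]; ring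
  simp_rw [this]
  rw [integral_const_mul, aux_integral_mul_exp_neg_mul_sq hb, mul_zero]

lemma aux_integral_sq_gaussianReal {v : ℝ≥0} (hv : v ≠ 0) :
    ∫ x, x ^ 2 ∂(gaussianReal 0 v) = (v : ℝ) := by
  have hv' : (0:ℝ) < v := by positivity
  have hb : (0:ℝ) < (2 * (v : ℝ))⁻¹ := by positivity
  rw [aux_gaussianReal_integral hv]
  have : ∀ x : ℝ, gaussianPDFReal 0 v x * x ^ 2
      = (Real.sqrt (2 * π * v))⁻¹ * (x ^ 2 * rexp (-(2 * (v : ℝ))⁻¹ * x ^ 2)) := by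
    intro x; rw [aux_gaussian_pdf_eq hv]; ring
  simp_rw [this]
  rw [integral_const_mul, aux_integral_sq_mul_exp_neg_mul_sq hb]
  have harg : π / (2 * (v : ℝ))⁻¹ = 2 * π * v := by
    field_simp
  rw [harg]
  have hs : (0:ℝ) < Real.sqrt (2 * π * v) := Real.sqrt_pos.mpr (by positivity)
  field_simp

lemma aux_indepFun_prod_mk_left {Ω α β γ : Type*} [MeasurableSpace Ω] [MeasurableSpace α]
    [MeasurableSpace β] [MeasurableSpace γ]
    {μ : Measure Ω} [IsProbabilityMeasure μ]
    {X : Ω → α} {Z : Ω → β} {W : Ω → γ}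
    (hX : Measurable X) (hZ : Measurable Z) (hW : Measurable W)
    (h1 : IndepFun X (fun ω => (Z ω, W ω)) μ)
    (h2 : IndepFun Z W μ) :
    IndepFun (fun ω => (X ω, Z ω)) W μ := by
  have hZW : Measurable fun ω => (Z ω, W ω) := hZ.prodMk hW
  haveI : IsProbabilityMeasure (μ.map X) := Measure.isProbabilityMeasure_map hX.aemeasurable
  haveI : IsProbabilityMeasure (μ.map Z) := Measure.isProbabilityMeasure_map hZ.aemeasurable
  haveI : IsProbabilityMeasure (μ.map W) := Measure.isProbabilityMeasure_map hW.aemeasurable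
  rw [indepFun_iff_map_prod_eq_prod_map_map ((hX.prodMk hZ).aemeasurable) hW.aemeasurable]
  have e1 : μ.map (fun ω => (X ω, (Z ω, W ω)))
      = (μ.map X).prod (μ.map (fun ω => (Z ω, W ω))) :=
    (indepFun_iff_map_prod_eq_prod_map_map hX.aemeasurable hZW.aemeasurable).mp h1
  have e2 : μ.map (fun ω => (Z ω, W ω)) = (μ.map Z).prod (μ.map W) :=
    (indepFun_iff_map_prod_eq_prod_map_map hZ.aemeasurable hW.aemeasurable).mp h2
  have hXZ : IndepFun X Z μ := by
    have := h1.comp measurable_id (measurable_fst : Measurable fun p : β × γ => p.1)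
    exact this
  have e3 : μ.map (fun ω => (X ω, Z ω)) = (μ.map X).prod (μ.map Z) :=
    (indepFun_iff_map_prod_eq_prod_map_map hX.aemeasurable hZ.aemeasurable).mp hXZ
  have key : μ.map (fun ω => ((X ω, Z ω), W ω))
      = Measure.map (MeasurableEquiv.prodAssoc.symm)
          (μ.map (fun ω => (X ω, (Z ω, W ω)))) := by
    rw [Measure.map_map MeasurableEquiv.prodAssoc.symm.measurable (hX.prodMk hZW)]
    rfl
  rw [key, e1, e2, e3]
  exact ((measurePreserving_prodAssoc (μ.map X) (μ.map Z) (μ.map W)).symm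
    MeasurableEquiv.prodAssoc).map_eq

/-- with `x = y + n`, `n ~ N(0, σ²I_m)` independent of `y` (σ > 0),
and a partition `𝒥` with at least one nonempty block:
(1) the identity map is not `𝒥`-invariant;
(2) for any `𝒥`-invariant `f` (with finite second moments),
`E‖f(x) − x‖² = E‖f(x) − y‖² + m·σ²`; hence minimizing the self-supervised loss
is equivalent to minimizing the supervised loss, the self-supervised loss is
bounded below by `m·σ² = E‖n‖²`, and `f` improves over the identity in expected
supervised error iff `E‖f(x) − y‖² < m·σ²`. -/
theorem stmt_18 {Ω : Type*} [MeasurableSpace Ω] (μ : Measure Ω) [IsProbabilityMeasure μ]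
    (m : ℕ) (𝒥 : Set (Set (Fin m))) (h𝒥 : Setoid.IsPartition 𝒥)
    (J₀ : Set (Fin m)) (hJ₀ : J₀ ∈ 𝒥) (hJ₀ne : J₀.Nonempty)
    (σ : ℝ≥0) (hσ : 0 < σ)
    (x y n : Ω → (Fin m → ℝ))
    (hx : Measurable x) (hy : Measurable y) (hn : Measurable n)
    (hsum : ∀ ω, x ω = y ω + n ω)
    (hyn : IndepFun y n μ)
    (hiid : iIndepFun (fun (i : Fin m) ω => n ω i) μ)
    (hgauss : ∀ i : Fin m, Measure.map (fun ω => n ω i) μ = gaussianReal 0 (σ ^ 2)) :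
    ¬ JInvariant m 𝒥 id ∧
    ∀ f : (Fin m → ℝ) → (Fin m → ℝ), JInvariant m 𝒥 f → Measurable f →
      Integrable (fun ω => ∑ i, (f (x ω) i - x ω i) ^ 2) μ →
      Integrable (fun ω => ∑ i, (f (x ω) i - y ω i) ^ 2) μ →
      ∫ ω, ∑ i, (f (x ω) i - x ω i) ^ 2 ∂μ =
        (∫ ω, ∑ i, (f (x ω) i - y ω i) ^ 2 ∂μ) + (m : ℝ) * (σ : ℝ) ^ 2 := by
  classical
  have hv : (σ ^ 2 : ℝ≥0) ≠ 0 := by positivity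
  constructor
  · intro h
    obtain ⟨i, hi⟩ := hJ₀ne
    have := h J₀ hJ₀ (fun _ => 0) (fun j => if j ∈ J₀ then 1 else 0)
      (fun j hj => by simp [hj]) i hi
    simp [hi] at this
  intro f hf hfm hint1 hint2
  -- notation
  have hNmeas : ∀ i : Fin m, Measurable fun ω => n ω i :=
    fun i => (measurable_pi_apply i).comp hn
  have hAmeas : ∀ i : Fin m, Measurable fun ω => f (x ω) i - y ω i := fun i =>
    ((measurable_pi_apply i).comp (hfm.comp hx)).sub ((measurable_pi_apply i).comp hy)
  -- independence of the error and the noise coordinate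
  have hInd : ∀ i : Fin m,
      IndepFun (fun ω => f (x ω) i - y ω i) (fun ω => n ω i) μ := by
    intro i
    obtain ⟨J, ⟨hJmem, hiJ⟩, -⟩ := h𝒥.2 i
    set φ : (Fin m → ℝ) → (Fin m → ℝ) := fun v => Function.update v i 0 with hφdef
    have hφm : Measurable φ := by
      apply measurable_pi_lambda
      intro j
      simp only [hφdef, Function.update_apply]
      by_cases h : j = i
      · simp [h]
      · simp only [h, if_false]
        exact measurable_pi_apply j
    have key : IndepFun (fun ω => (y ω, φ (n ω))) (fun ω => n ω i) μ := by
      refine aux_indepFun_prod_mk_left hy (hφm.comp hn) (hNmeas i) ?_ ?_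
      · exact hyn.comp measurable_id (hφm.prodMk (measurable_pi_apply i))
      · -- φ ∘ n is independent of n_i
        have h2 := hiid.indepFun_finset (Finset.univ.erase i) {i}
          (by simp) hNmeas
        set g1 : ((j : (Finset.univ.erase i : Finset (Fin m))) → ℝ) → (Fin m → ℝ) :=
          fun w j => if h : j = i then 0
            else w ⟨j, Finset.mem_erase.mpr ⟨h, Finset.mem_univ j⟩⟩ with hg1def
        have hg1m : Measurable g1 := by
          apply measurable_pi_lambda
          intro j
          by_cases h : j = i
          · simp only [hg1def, h, dif_pos]
            exact measurable_const
          · simp only [hg1def, h, dif_neg, not_false_iff]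
            exact measurable_pi_apply _
        set g2 : ((j : ({i} : Finset (Fin m))) → ℝ) → ℝ :=
          fun w => w ⟨i, Finset.mem_singleton_self i⟩ with hg2def
        have hg2m : Measurable g2 := measurable_pi_apply _
        have h3 := h2.comp hg1m hg2m
        have e1 : (g1 ∘ fun a (j : (Finset.univ.erase i : Finset (Fin m))) => n a j)
            = fun ω => φ (n ω) := by
          funext ω
          funext j
          by_cases h : j = i
          · simp [hg1def, hφdef, h, Function.comp_apply]
          · simp [hg1def, hφdef, h, Function.comp_apply, Function.update_apply]
        have e2 : (g2 ∘ fun a (j : ({i} : Finset (Fin m))) => n a j)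
            = fun ω => n ω i := rfl
        rw [e1, e2] at h3
        exact h3
    have hΨ : Measurable (fun p : (Fin m → ℝ) × (Fin m → ℝ) => f (p.1 + p.2) i - p.1 i) :=
      ((measurable_pi_apply i).comp (hfm.comp (measurable_fst.add measurable_snd))).sub
        ((measurable_pi_apply i).comp measurable_fst)
    have hrep : (fun ω => f (x ω) i - y ω i)
        = (fun p : (Fin m → ℝ) × (Fin m → ℝ) => f (p.1 + p.2) i - p.1 i)
          ∘ (fun ω => (y ω, φ (n ω))) := by
      funext ω
      simp only [Function.comp_apply]
      congr 1
      apply hf J hJmem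
      · intro j hj
        have hne : j ≠ i := fun h => hj (h ▸ hiJ)
        simp [hsum ω, hφdef, Function.update_apply, hne]
      · exact hiJ
    rw [hrep]
    exact key.comp hΨ measurable_id
  -- integrability facts
  have habs : ∀ (i : Fin m) (g : Fin m → Ω → ℝ) (ω : Ω),
      ‖g i ω ^ 2‖ ≤ ∑ j, g j ω ^ 2 := by
    intro i g ω
    rw [Real.norm_eq_abs, abs_of_nonneg (sq_nonneg _)]
    exact Finset.single_le_sum (f := fun j => g j ω ^ 2)
      (fun j _ => sq_nonneg _) (Finset.mem_univ i)
  have intA2 : ∀ i : Fin m, Integrable (fun ω => (f (x ω) i - y ω i) ^ 2) μ := by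
    intro i
    refine hint2.mono' ((hAmeas i).pow_const 2).aestronglyMeasurable ?_
    exact Filter.Eventually.of_forall fun ω => habs i (fun j ω => f (x ω) j - y ω j) ω
  have hint1' : Integrable (fun ω => ∑ i, ((f (x ω) i - y ω i) - n ω i) ^ 2) μ := by
    refine hint1.congr (Filter.Eventually.of_forall fun ω => ?_)
    refine Finset.sum_congr rfl fun i _ => ?_
    rw [hsum ω]
    simp [sub_sub]
  have intAN2 : ∀ i : Fin m,
      Integrable (fun ω => ((f (x ω) i - y ω i) - n ω i) ^ 2) μ := by
    intro i
    refine hint1'.mono' (((hAmeas i).sub (hNmeas i)).pow_const 2).aestronglyMeasurable ?_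
    exact Filter.Eventually.of_forall fun ω =>
      habs i (fun j ω => (f (x ω) j - y ω j) - n ω j) ω
  have intN : ∀ i : Fin m, Integrable (fun ω => n ω i) μ := by
    intro i
    have h1 : Integrable (fun t : ℝ => t) (Measure.map (fun ω => n ω i) μ) := by
      rw [hgauss i]; exact aux_integrable_id_gaussianReal hv
    exact (integrable_map_measure h1.aestronglyMeasurable (hNmeas i).aemeasurable).mp h1
  have intN2 : ∀ i : Fin m, Integrable (fun ω => n ω i ^ 2) μ := by
    intro i
    have h1 : Integrable (fun t : ℝ => t ^ 2) (Measure.map (fun ω => n ω i) μ) := by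
      rw [hgauss i]; exact aux_integrable_sq_gaussianReal hv
    exact (integrable_map_measure h1.aestronglyMeasurable (hNmeas i).aemeasurable).mp h1
  have intA : ∀ i : Fin m, Integrable (fun ω => f (x ω) i - y ω i) μ := by
    intro i
    refine (hint2.add (integrable_const 1)).mono' (hAmeas i).aestronglyMeasurable ?_
    refine Filter.Eventually.of_forall fun ω => ?_
    rw [Real.norm_eq_abs]
    calc |f (x ω) i - y ω i| ≤ (f (x ω) i - y ω i) ^ 2 + 1 := by nlinarith [sq_abs (f (x ω) i - y ω i), sq_nonneg (|f (x ω) i - y ω i| - 1)]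
    _ ≤ (∑ j, (f (x ω) j - y ω j) ^ 2) + 1 := by
        have := habs i (fun j ω => f (x ω) j - y ω j) ω
        rw [Real.norm_eq_abs, abs_of_nonneg (sq_nonneg _)] at this
        linarith
  have intAN : ∀ i : Fin m,
      Integrable (fun ω => (f (x ω) i - y ω i) * n ω i) μ :=
    fun i => (hInd i).integrable_mul (intA i) (intN i)
  -- moments of the noise
  have EN : ∀ i : Fin m, ∫ ω, n ω i ∂μ = 0 := by
    intro i
    have h1 : ∫ ω, n ω i ∂μ = ∫ t, t ∂(Measure.map (fun ω => n ω i) μ) := by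
      rw [integral_map (hNmeas i).aemeasurable]
      exact aestronglyMeasurable_id
    rw [h1, hgauss i, aux_integral_id_gaussianReal hv]
  have EN2 : ∀ i : Fin m, ∫ ω, n ω i ^ 2 ∂μ = (σ : ℝ) ^ 2 := by
    intro i
    have h1 : ∫ ω, n ω i ^ 2 ∂μ = ∫ t, t ^ 2 ∂(Measure.map (fun ω => n ω i) μ) := by
      rw [integral_map (hNmeas i).aemeasurable]
      exact (measurable_id.pow_const 2).aestronglyMeasurable
    rw [h1, hgauss i, aux_integral_sq_gaussianReal hv]
    push_cast
    ring
  have EAN : ∀ i : Fin m, ∫ ω, (f (x ω) i - y ω i) * n ω i ∂μ = 0 := by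
    intro i
    have h : ∫ ω, (f (x ω) i - y ω i) * n ω i ∂μ
        = (∫ ω, f (x ω) i - y ω i ∂μ) * ∫ ω, n ω i ∂μ :=
      (hInd i).integral_fun_mul_eq_mul_integral (intA i).1 (intN i).1
    rw [h, EN i, mul_zero]
  -- main computation
  have hterm : ∀ i : Fin m, ∫ ω, ((f (x ω) i - y ω i) - n ω i) ^ 2 ∂μ
      = (∫ ω, (f (x ω) i - y ω i) ^ 2 ∂μ) + (σ : ℝ) ^ 2 := by
    intro i
    have hre : ∀ ω, ((f (x ω) i - y ω i) - n ω i) ^ 2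
        = ((f (x ω) i - y ω i) ^ 2 + n ω i ^ 2)
          - 2 * ((f (x ω) i - y ω i) * n ω i) := fun ω => by ring
    simp_rw [hre]
    have i1 : Integrable (fun ω => (f (x ω) i - y ω i) ^ 2 + n ω i ^ 2) μ :=
      (intA2 i).add (intN2 i)
    have i2 : Integrable (fun ω => 2 * ((f (x ω) i - y ω i) * n ω i)) μ :=
      (intAN i).const_mul 2
    rw [integral_sub i1 i2, integral_add (intA2 i) (intN2 i), integral_const_mul, EAN i, EN2 i]
    ring
  have hLHS : ∫ ω, ∑ i, (f (x ω) i - x ω i) ^ 2 ∂μ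
      = ∫ ω, ∑ i, ((f (x ω) i - y ω i) - n ω i) ^ 2 ∂μ := by
    refine integral_congr_ae (Filter.Eventually.of_forall fun ω => ?_)
    refine Finset.sum_congr rfl fun i _ => ?_
    rw [hsum ω]
    simp [sub_sub]
  rw [hLHS, integral_finset_sum _ (fun i _ => intAN2 i)]
  simp_rw [hterm]
  rw [Finset.sum_add_distrib, Finset.sum_const, Finset.card_univ, Fintype.card_fin,
    ← integral_finset_sum _ (fun i _ => intA2 i), nsmul_eq_mul]
end
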